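/- Under the LION setup with filtration (F_k) (Assumptions below) and with ηλ ≤ 1, define δ^k = c^k − ∇f(θ^k). Then for every k ≥ 1: E[‖δ^k‖₂] ≤ β₂^{k-1} σ + 2Lη√d/(1 − β₂) + (|β₁ − β₂| + 1 − β₁) · σ/√(1 − β₂). -/

import Mathlib

open MeasureTheory Real Finset

local notation "⟪" x ", " y "⟫" => @inner ℝ _ _ x y

/-- componentwise sign map, with sign 0 = 0. -/
noncomputable def signVec {d : ℕ} (x : EuclideanSpace ℝ (Fin d)) : EuclideanSpace ℝ (Fin d) :=
  (EuclideanSpace.equiv (Fin d) ℝ).symm fun i => Real.sign (x i)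

/-- the ℓ∞ norm on ℝ^d. -/
noncomputable def linfNorm {d : ℕ} (x : EuclideanSpace ℝ (Fin d)) : ℝ :=
  ‖EuclideanSpace.equiv (Fin d) ℝ x‖

/-- the ℓ1 norm on ℝ^d. -/
noncomputable def l1Norm {d : ℕ} (x : EuclideanSpace ℝ (Fin d)) : ℝ :=
  ∑ i, |x i|

/-!
Write `ξ k = g k - ∇f(θ k)` for the gradient noise: a martingale difference sequence with
`E‖ξ k‖² ≤ σ²`. The momentum `m` is an exponential moving average (EMA) of `g`, so
`c k - ∇f(θ k)` splits into the noise part `β₁ • EMA(ξ)_(k-1) + (1 - β₁) • ξ k` and the drift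
`β₁ • (EMA(∇f ∘ θ)_(k-1) - ∇f(θ k))`.

Drift: the weight decay keeps every iterate in the box `‖θ‖_∞ ≤ 1/λ`, so one step moves `θ` by at
most `2η√d` and `∇f(θ)` by at most `2Lη√d`; an EMA of a sequence whose increments are at most `C`
lags behind it by at most `C / (1 - β₂)`.

Noise: martingale differences are orthogonal in `L²`, so the second moment of the noise part is
an explicit weighted sum of the `σ²`; `E‖N‖ ≤ √(E‖N‖²)` and an elementary inequality in `β₁, β₂`
turn it into the first-moment bound.
-/

section LinfNorm

variable {d : ℕ}

lemma abs_apply_le_linfNorm (x : EuclideanSpace ℝ (Fin d)) (i : Fin d) : |x i| ≤ linfNorm x :=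
  norm_le_pi_norm (EuclideanSpace.equiv (Fin d) ℝ x) i

lemma linfNorm_add_le (x y : EuclideanSpace ℝ (Fin d)) :
    linfNorm (x + y) ≤ linfNorm x + linfNorm y := by
  simp only [linfNorm, map_add]
  exact norm_add_le _ _

lemma linfNorm_smul (r : ℝ) (x : EuclideanSpace ℝ (Fin d)) :
    linfNorm (r • x) = |r| * linfNorm x := by
  simp only [linfNorm, map_smul, norm_smul, Real.norm_eq_abs]

lemma linfNorm_signVec_le_one (x : EuclideanSpace ℝ (Fin d)) : linfNorm (signVec x) ≤ 1 := by
  refine pi_norm_le_iff_of_nonneg zero_le_one |>.2 fun i => ?_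
  rcases Real.sign_apply_eq (x i) with h | h | h <;>
    simp [signVec, h]

lemma norm_le_sqrt_mul_linfNorm (x : EuclideanSpace ℝ (Fin d)) : ‖x‖ ≤ √d * linfNorm x := by
  have hx : 0 ≤ linfNorm x := norm_nonneg _
  rw [EuclideanSpace.norm_eq, ← Real.sqrt_sq hx, ← Real.sqrt_mul d.cast_nonneg]
  refine Real.sqrt_le_sqrt ?_
  calc ∑ i, ‖x i‖ ^ 2 ≤ ∑ _i : Fin d, linfNorm x ^ 2 := by
        gcongr with i
        exact abs_apply_le_linfNorm x i
    _ = d * linfNorm x ^ 2 := by simp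

lemma linfNorm_lion_increment_le {η lam : ℝ} (hη : 0 ≤ η) (hlam : 0 < lam)
    {x : EuclideanSpace ℝ (Fin d)} (hx : linfNorm x ≤ 1 / lam) (s : EuclideanSpace ℝ (Fin d)) :
    linfNorm (η • (signVec s + lam • x)) ≤ 2 * η := by
  have hlamx : lam * linfNorm x ≤ 1 := by rwa [le_div_iff₀' hlam] at hx
  have hsum := linfNorm_add_le (signVec s) (lam • x)
  rw [linfNorm_smul, abs_of_pos hlam] at hsum
  rw [linfNorm_smul, abs_of_nonneg hη]
  nlinarith [linfNorm_signVec_le_one s]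

lemma linfNorm_lion_update_le {η lam : ℝ} (hη : 0 ≤ η) (hlam : 0 < lam) (hηlam : η * lam ≤ 1)
    {x : EuclideanSpace ℝ (Fin d)} (hx : linfNorm x ≤ 1 / lam) (s : EuclideanSpace ℝ (Fin d)) :
    linfNorm (x - η • (signVec s + lam • x)) ≤ 1 / lam := by
  have hrw : x - η • (signVec s + lam • x) = (1 - η * lam) • x + (-η) • signVec s := by module
  calc linfNorm (x - η • (signVec s + lam • x))
      ≤ (1 - η * lam) * linfNorm x + η * linfNorm (signVec s) := by
        rw [hrw]
        refine (linfNorm_add_le _ _).trans_eq ?_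
        rw [linfNorm_smul, linfNorm_smul, abs_of_nonneg (by linarith), abs_neg, abs_of_nonneg hη]
    _ ≤ (1 - η * lam) * (1 / lam) + η * 1 := by
        gcongr
        exact linfNorm_signVec_le_one s
    _ = 1 / lam := by field_simp; ring

end LinfNorm

section LionIterates

variable {d : ℕ} {η lam : ℝ} {θ c : ℕ → EuclideanSpace ℝ (Fin d)}

lemma linfNorm_lion_iterate_le (hη : 0 ≤ η) (hlam : 0 < lam) (hηlam : η * lam ≤ 1)
    (hθrec : ∀ k, 1 ≤ k → θ (k + 1) = θ k - η • (signVec (c k) + lam • θ k))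
    (hθ₁ : linfNorm (θ 1) ≤ 1 / lam) : ∀ k, 1 ≤ k → linfNorm (θ k) ≤ 1 / lam := by
  intro k hk
  induction k, hk using Nat.le_induction with
  | base => exact hθ₁
  | succ k hk ih => rw [hθrec k hk]; exact linfNorm_lion_update_le hη hlam hηlam ih _

lemma norm_lion_iterate_sub_succ_le (hη : 0 ≤ η) (hlam : 0 < lam) (hηlam : η * lam ≤ 1)
    (hθrec : ∀ k, 1 ≤ k → θ (k + 1) = θ k - η • (signVec (c k) + lam • θ k))
    (hθ₁ : linfNorm (θ 1) ≤ 1 / lam) {k : ℕ} (hk : 1 ≤ k) :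
    ‖θ k - θ (k + 1)‖ ≤ 2 * η * √d := by
  rw [hθrec k hk, sub_sub_cancel]
  calc ‖η • (signVec (c k) + lam • θ k)‖
      ≤ √d * linfNorm (η • (signVec (c k) + lam • θ k)) := norm_le_sqrt_mul_linfNorm _
    _ ≤ √d * (2 * η) := by
        gcongr
        exact linfNorm_lion_increment_le hη hlam
          (linfNorm_lion_iterate_le hη hlam hηlam hθrec hθ₁ k hk) _
    _ = 2 * η * √d := mul_comm _ _

end LionIterates

lemma nonneg_of_forall_norm_sub_le_mul {E F : Type*} [NormedAddCommGroup E] [Nontrivial E]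
    [SeminormedAddCommGroup F] {φ : E → F} {L : ℝ} (hL : ∀ x y, ‖φ x - φ y‖ ≤ L * ‖x - y‖) :
    0 ≤ L := by
  obtain ⟨x, hx⟩ := exists_ne (0 : E)
  refine nonneg_of_mul_nonneg_left ((norm_nonneg _).trans (hL x 0)) ?_
  simpa using hx

section Ema

variable {M : Type*} [AddCommGroup M] [Module ℝ M]

/-- Indexed like the LION momentum: `ema β x 0 = x 1` matches the initialisation `m⁰ = g¹`. -/
noncomputable def ema (β : ℝ) (x : ℕ → M) : ℕ → M
  | 0 => x 1
  | k + 1 => β • ema β x k + (1 - β) • x (k + 1)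

lemma ema_one (β : ℝ) (x : ℕ → M) : ema β x 1 = x 1 := by
  simp only [ema]; module

lemma ema_add (β : ℝ) (x y : ℕ → M) (k : ℕ) : ema β (x + y) k = ema β x k + ema β y k := by
  induction k with
  | zero => rfl
  | succ k ih => simp only [ema, ih, Pi.add_apply]; module

lemma ema_apply {Ω : Type*} (β : ℝ) (x : ℕ → Ω → M) (k : ℕ) (ω : Ω) :
    ema β x k ω = ema β (fun j => x j ω) k := by
  induction k with
  | zero => rfl
  | succ k ih => simp only [ema, Pi.add_apply, Pi.smul_apply, ih]

lemma eq_ema_of_rec {β : ℝ} {x m : ℕ → M} (h0 : m 0 = x 1)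
    (hrec : ∀ k, 1 ≤ k → m k = β • m (k - 1) + (1 - β) • x k) (k : ℕ) : m k = ema β x k := by
  induction k with
  | zero => exact h0
  | succ k ih => rw [hrec (k + 1) k.succ_pos, Nat.add_sub_cancel, ih]; rfl

end Ema

section EmaDrift

variable {E : Type*} [NormedAddCommGroup E] [NormedSpace ℝ E]

lemma norm_ema_sub_le {β C : ℝ} (hβ0 : 0 ≤ β) (hβ1 : β < 1) {x : ℕ → E}
    (hx : ∀ j, 1 ≤ j → ‖x j - x (j + 1)‖ ≤ C) (k : ℕ) :
    ‖ema β x k - x (k + 1)‖ ≤ C / (1 - β) := by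
  have h1β : 0 < 1 - β := by linarith
  induction k with
  | zero => simpa [ema] using div_nonneg ((norm_nonneg _).trans (hx 1 le_rfl)) h1β.le
  | succ k ih =>
    have hrw : ema β x (k + 1) - x (k + 1 + 1)
        = β • (ema β x k - x (k + 1)) + (x (k + 1) - x (k + 1 + 1)) := by
      simp only [ema]; module
    calc ‖ema β x (k + 1) - x (k + 1 + 1)‖
        ≤ β * ‖ema β x k - x (k + 1)‖ + ‖x (k + 1) - x (k + 1 + 1)‖ := by
          rw [hrw]
          refine (norm_add_le _ _).trans_eq ?_
          rw [norm_smul, Real.norm_eq_abs, abs_of_nonneg hβ0]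
      _ ≤ β * (C / (1 - β)) + C := by gcongr; exact hx _ k.succ_pos
      _ = C / (1 - β) := by field_simp; ring

lemma norm_momentum_sub_le {β₁ β₂ C : ℝ} (h10 : 0 ≤ β₁) (h11 : β₁ ≤ 1) (h20 : 0 ≤ β₂)
    (h21 : β₂ < 1) {g G : ℕ → E} (hG : ∀ j, 1 ≤ j → ‖G j - G (j + 1)‖ ≤ C) {k : ℕ} (hk : 1 ≤ k) :
    ‖β₁ • ema β₂ g (k - 1) + (1 - β₁) • g k - G k‖ ≤
      ‖β₁ • ema β₂ (g - G) (k - 1) + (1 - β₁) • (g - G) k‖ + C / (1 - β₂) := by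
  have hsplit : β₁ • ema β₂ g (k - 1) + (1 - β₁) • g k - G k =
      (β₁ • ema β₂ (g - G) (k - 1) + (1 - β₁) • (g - G) k) + β₁ • (ema β₂ G (k - 1) - G k) := by
    conv_lhs => rw [← sub_add_cancel g G, ema_add]
    simp only [Pi.add_apply, Pi.sub_apply]
    module
  have hdrift := norm_ema_sub_le h20 h21 hG (k - 1)
  rw [Nat.sub_add_cancel hk] at hdrift
  rw [hsplit]
  refine (norm_add_le _ _).trans (add_le_add le_rfl ?_)
  rw [norm_smul, Real.norm_eq_abs, abs_of_nonneg h10]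
  exact (mul_le_of_le_one_left (norm_nonneg _) h11).trans hdrift

end EmaDrift

lemma sqrt_sq_add_le_abs_add_sqrt (a b R : ℝ) (hR : 0 ≤ R) :
    √(a ^ 2 + R) ≤ |b| + √((a - b) ^ 2 + R) := by
  have hab : |a - b| ≤ √((a - b) ^ 2 + R) := by
    rw [← Real.sqrt_sq_eq_abs]; exact Real.sqrt_le_sqrt (by linarith)
  refine Real.sqrt_le_iff.2 ⟨by positivity, ?_⟩
  rw [add_sq, Real.sq_sqrt (by positivity), sq_abs]
  nlinarith [le_abs_self (b * (a - b)), abs_mul b (a - b),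
    mul_le_mul_of_nonneg_left hab (abs_nonneg b)]

lemma sq_mul_div_add_sq_le (β₁ β₂ : ℝ) (h10 : 0 < β₁) (h11 : β₁ < 1) (h20 : 0 < β₂)
    (h21 : β₂ < 1) :
    β₁ ^ 2 * ((1 - β₂) / (1 + β₂)) + (1 - β₁) ^ 2 ≤ (|β₁ - β₂| + 1 - β₁) ^ 2 / (1 - β₂) := by
  rw [le_div_iff₀ (by linarith), mul_div_assoc', div_add' _ _ _ (by linarith),
    div_mul_eq_mul_div, div_le_iff₀ (by linarith)]
  rcases le_total β₂ β₁ with h | h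
  · rw [abs_of_nonneg (by linarith)]
    nlinarith [mul_nonneg (sub_nonneg.2 h) (sub_nonneg.2 h11.le), mul_nonneg h20.le h10.le,
      mul_nonneg (mul_nonneg (sub_nonneg.2 h) (sub_nonneg.2 h11.le)) h20.le,
      mul_nonneg (mul_nonneg (sub_nonneg.2 h) (sub_nonneg.2 h11.le)) h10.le]
  · rw [abs_of_nonpos (by linarith)]
    nlinarith [mul_nonneg (sub_nonneg.2 h) (sub_nonneg.2 h21.le), mul_nonneg h20.le h10.le,
      mul_nonneg (mul_nonneg (sub_nonneg.2 h) (sub_nonneg.2 h21.le)) h20.le,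
      mul_nonneg (mul_nonneg (sub_nonneg.2 h) (sub_nonneg.2 h21.le)) h10.le]

/-- Minkowski splits off `β₂ * q`; what remains is a convex combination (with weight `q ^ 2`) of
two quantities that are both at most `(|β₁ - β₂| + 1 - β₁) ^ 2 / (1 - β₂)`. -/
lemma sqrt_momentum_coeff_le (β₁ β₂ q : ℝ) (h10 : 0 < β₁) (h11 : β₁ < 1) (h20 : 0 < β₂)
    (h21 : β₂ < 1) (hq0 : 0 ≤ q) (hq1 : q ≤ 1) :
    √(β₁ ^ 2 * (q ^ 2 + (1 - q ^ 2) * ((1 - β₂) / (1 + β₂))) + (1 - β₁) ^ 2) ≤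
      β₂ * q + (|β₁ - β₂| + 1 - β₁) / √(1 - β₂) := by
  set D := (1 - β₂) / (1 + β₂)
  set A := |β₁ - β₂| + 1 - β₁
  have hA0 : 0 ≤ A := by have := abs_nonneg (β₁ - β₂); simp only [A]; linarith
  have hD : 0 ≤ D := div_nonneg (by linarith) (by linarith)
  have hq2 : q ^ 2 ≤ 1 := pow_le_one₀ hq0 hq1
  have hA : (β₁ - β₂) ^ 2 + (1 - β₁) ^ 2 ≤ A ^ 2 / (1 - β₂) := by
    refine le_trans ?_ (le_div_self (sq_nonneg A) (by linarith) (by linarith))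
    nlinarith [sq_abs (β₁ - β₂), abs_nonneg (β₁ - β₂)]
  have hmix : ((β₁ - β₂) * q) ^ 2 + (β₁ ^ 2 * (1 - q ^ 2) * D + (1 - β₁) ^ 2) ≤
      A ^ 2 / (1 - β₂) := by
    have hB := sq_mul_div_add_sq_le β₁ β₂ h10 h11 h20 h21
    nlinarith [mul_le_mul_of_nonneg_left hA (sq_nonneg q),
      mul_le_mul_of_nonneg_left hB (sub_nonneg.2 hq2)]
  calc √(β₁ ^ 2 * (q ^ 2 + (1 - q ^ 2) * D) + (1 - β₁) ^ 2)
      = √((β₁ * q) ^ 2 + (β₁ ^ 2 * (1 - q ^ 2) * D + (1 - β₁) ^ 2)) := by ring_nf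
    _ ≤ |β₂ * q| + √((β₁ * q - β₂ * q) ^ 2 + (β₁ ^ 2 * (1 - q ^ 2) * D + (1 - β₁) ^ 2)) :=
        sqrt_sq_add_le_abs_add_sqrt _ _ _ (by positivity)
    _ ≤ β₂ * q + √(A ^ 2 / (1 - β₂)) := by
        rw [abs_of_nonneg (by positivity), ← sub_mul]
        gcongr
    _ = β₂ * q + A / √(1 - β₂) := by
        rw [Real.sqrt_div' _ (by linarith), Real.sqrt_sq hA0]

section Moments

variable {Ω E : Type*} {m m₀ : MeasurableSpace Ω} {μ : Measure Ω} [NormedAddCommGroup E]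

lemma integral_norm_le_sqrt_integral_norm_sq [IsProbabilityMeasure μ] {X : Ω → E}
    (hX : MemLp X 2 μ) : ∫ ω, ‖X ω‖ ∂μ ≤ √(∫ ω, ‖X ω‖ ^ 2 ∂μ) := by
  have hvar := ProbabilityTheory.variance_eq_sub hX.norm ▸
    ProbabilityTheory.variance_nonneg (fun ω => ‖X ω‖) μ
  exact Real.le_sqrt_of_sq_le (by simpa using hvar)

lemma integral_le_of_condExp_le [IsProbabilityMeasure μ] (hm : m ≤ m₀) {f : Ω → ℝ} {c : ℝ}
    (hf : ∀ᵐ ω ∂μ, μ[f | m] ω ≤ c) : ∫ ω, f ω ∂μ ≤ c := by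
  calc ∫ ω, f ω ∂μ = ∫ ω, μ[f | m] ω ∂μ := (integral_condExp hm).symm
    _ ≤ ∫ _ω, c ∂μ := integral_mono_ae integrable_condExp (integrable_const c) hf
    _ = c := by simp

lemma condExp_sub_ae_eq_zero [NormedSpace ℝ E] [CompleteSpace E] [IsFiniteMeasure μ]
    (hm : m ≤ m₀) {g h : Ω → E} (hg : Integrable g μ) (hgh : μ[g | m] =ᵐ[μ] h) :
    μ[g - h | m] =ᵐ[μ] 0 := by
  have hh : Integrable h μ := integrable_condExp.congr hgh
  have hcond_h : μ[h | m] =ᵐ[μ] μ[g | m] :=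
    (condExp_congr_ae hgh.symm).trans (condExp_condExp_of_le le_rfl hm)
  filter_upwards [condExp_sub hg hh m, hcond_h] with ω hsub hω
  simp [hsub, hω]

variable [InnerProductSpace ℝ E]

lemma integral_inner_eq_zero_of_condExp_ae_eq_zero [CompleteSpace E] [IsFiniteMeasure μ]
    (hm : m ≤ m₀) {X Y : Ω → E} (hXm : AEStronglyMeasurable[m] X μ) (hX : MemLp X 2 μ)
    (hY : MemLp Y 2 μ) (hY0 : μ[Y | m] =ᵐ[μ] 0) :
    ∫ ω, inner ℝ (X ω) (Y ω) ∂μ = 0 := by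
  have hXY : Integrable (fun ω => innerSL ℝ (X ω) (Y ω)) μ :=
    memLp_one_iff_integrable.1 ((innerSL ℝ).memLp_of_bilin 1 hX hY)
  calc ∫ ω, inner ℝ (X ω) (Y ω) ∂μ = ∫ ω, μ[fun ω => innerSL ℝ (X ω) (Y ω) | m] ω ∂μ :=
        (integral_condExp hm).symm
    _ = ∫ ω, innerSL ℝ (X ω) (μ[Y | m] ω) ∂μ :=
        integral_congr_ae <| condExp_bilin_of_aestronglyMeasurable_left (innerSL ℝ) hXm hXY
          (hY.integrable one_le_two)
    _ = 0 := by
        rw [integral_congr_ae (g := 0) (hY0.mono fun ω hω => by simp [hω])]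
        simp

lemma integral_norm_add_sq_of_integral_inner_eq_zero {X Y : Ω → E}
    (hX : MemLp X 2 μ) (hY : MemLp Y 2 μ) (hXY : ∫ ω, inner ℝ (X ω) (Y ω) ∂μ = 0) :
    ∫ ω, ‖X ω + Y ω‖ ^ 2 ∂μ = ∫ ω, ‖X ω‖ ^ 2 ∂μ + ∫ ω, ‖Y ω‖ ^ 2 ∂μ := by
  have hinner : Integrable (fun ω => inner ℝ (X ω) (Y ω)) μ :=
    memLp_one_iff_integrable.1 ((innerSL ℝ).memLp_of_bilin 1 hX hY)
  have hX2 := hX.norm.integrable_sq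
  have hcross : Integrable (fun ω => ‖X ω‖ ^ 2 + 2 * inner ℝ (X ω) (Y ω)) μ :=
    hX2.add (hinner.const_mul 2)
  simp_rw [norm_add_sq_real]
  rw [integral_add hcross hY.norm.integrable_sq, integral_add hX2 (hinner.const_mul 2),
    integral_const_mul, hXY, mul_zero, add_zero]

end Moments

section MartingaleDifference

variable {Ω E : Type*} {m₀ : MeasurableSpace Ω} {μ : Measure Ω} [NormedAddCommGroup E]

structure IsMartingaleDiffSeq [NormedSpace ℝ E] [CompleteSpace E] (𝓕 : Filtration ℕ m₀)
    (μ : Measure Ω) (ξ : ℕ → Ω → E) (σ : ℝ) : Prop where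
  aestronglyMeasurable : ∀ k, 1 ≤ k → AEStronglyMeasurable[𝓕 k] (ξ k) μ
  memLp : ∀ k, 1 ≤ k → MemLp (ξ k) 2 μ
  condExp_ae_eq_zero : ∀ k, 1 ≤ k → μ[ξ k | 𝓕 (k - 1)] =ᵐ[μ] 0
  integral_norm_sq_le : ∀ k, 1 ≤ k → ∫ ω, ‖ξ k ω‖ ^ 2 ∂μ ≤ σ ^ 2

lemma isMartingaleDiffSeq_sub [NormedSpace ℝ E] [CompleteSpace E] [IsProbabilityMeasure μ]
    {𝓕 : Filtration ℕ m₀} {g G : ℕ → Ω → E} {σ : ℝ}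
    (hg_meas : ∀ k, 1 ≤ k → StronglyMeasurable[𝓕 k] (g k)) (hg : ∀ k, 1 ≤ k → MemLp (g k) 2 μ)
    (hG : ∀ k, 1 ≤ k → μ[g k | 𝓕 (k - 1)] =ᵐ[μ] G k)
    (hvar : ∀ k, 1 ≤ k → ∀ᵐ ω ∂μ, μ[fun ω' => ‖g k ω' - G k ω'‖ ^ 2 | 𝓕 (k - 1)] ω ≤ σ ^ 2) :
    IsMartingaleDiffSeq 𝓕 μ (g - G) σ where
  aestronglyMeasurable k hk := (hg_meas k hk).aestronglyMeasurable.sub <|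
    (stronglyMeasurable_condExp.aestronglyMeasurable.congr (hG k hk)).mono (𝓕.mono (Nat.sub_le k 1))
  memLp k hk := (hg k hk).sub (((hg k hk).condExp one_le_two).ae_eq (hG k hk))
  condExp_ae_eq_zero k hk :=
    condExp_sub_ae_eq_zero (𝓕.le _) ((hg k hk).integrable one_le_two) (hG k hk)
  integral_norm_sq_le k hk := integral_le_of_condExp_le (𝓕.le _) (hvar k hk)

variable [InnerProductSpace ℝ E] {𝓕 : Filtration ℕ m₀} {ξ : ℕ → Ω → E} {σ β : ℝ}

lemma aestronglyMeasurable_ema (hξm : ∀ k, 1 ≤ k → AEStronglyMeasurable[𝓕 k] (ξ k) μ) :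
    ∀ k, 1 ≤ k → AEStronglyMeasurable[𝓕 k] (ema β ξ k) μ := by
  intro k hk
  induction k, hk using Nat.le_induction with
  | base => rw [ema_one]; exact hξm 1 le_rfl
  | succ k hk ih =>
    exact ((ih.mono (𝓕.mono k.le_succ)).const_smul β).add ((hξm (k + 1) (by omega)).const_smul _)

lemma memLp_ema (hξ : ∀ k, 1 ≤ k → MemLp (ξ k) 2 μ) (k : ℕ) : MemLp (ema β ξ k) 2 μ := by
  induction k with
  | zero => exact hξ 1 le_rfl
  | succ k ih => exact (ih.const_smul β).add ((hξ (k + 1) k.succ_pos).const_smul _)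

variable [CompleteSpace E] [IsProbabilityMeasure μ]

lemma integral_norm_smul_ema_add_smul_sq (hξ : IsMartingaleDiffSeq 𝓕 μ ξ σ) {k : ℕ} (hk : 1 ≤ k)
    (a b : ℝ) :
    ∫ ω, ‖a • ema β ξ k ω + b • ξ (k + 1) ω‖ ^ 2 ∂μ =
      a ^ 2 * ∫ ω, ‖ema β ξ k ω‖ ^ 2 ∂μ + b ^ 2 * ∫ ω, ‖ξ (k + 1) ω‖ ^ 2 ∂μ := by
  have hX := (memLp_ema (β := β) hξ.memLp k).const_smul a
  have hY := (hξ.memLp (k + 1) k.succ_pos).const_smul b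
  have hY0 : μ[b • ξ (k + 1) | 𝓕 k] =ᵐ[μ] 0 := by
    have h0 := hξ.condExp_ae_eq_zero (k + 1) k.succ_pos
    rw [Nat.add_sub_cancel] at h0
    filter_upwards [condExp_smul b (ξ (k + 1)) (𝓕 k), h0] with ω h1 h2
    simp [h1, h2]
  have horth := integral_inner_eq_zero_of_condExp_ae_eq_zero (𝓕.le k)
    ((aestronglyMeasurable_ema hξ.aestronglyMeasurable k hk).const_smul a) hX hY hY0
  convert integral_norm_add_sq_of_integral_inner_eq_zero hX hY horth using 1 <;>
    simp [norm_smul, mul_pow, integral_const_mul]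

lemma integral_norm_ema_sq_le (hβ : 0 ≤ β) (hξ : IsMartingaleDiffSeq 𝓕 μ ξ σ) :
    ∀ k, 1 ≤ k → ∫ ω, ‖ema β ξ k ω‖ ^ 2 ∂μ ≤
      σ ^ 2 * ((β ^ (k - 1)) ^ 2 + (1 - (β ^ (k - 1)) ^ 2) * ((1 - β) / (1 + β))) := by
  intro k hk
  induction k, hk using Nat.le_induction with
  | base => simpa [ema_one] using hξ.integral_norm_sq_le 1 le_rfl
  | succ k hk ih =>
    have hstep := integral_norm_smul_ema_add_smul_sq (β := β) hξ hk β (1 - β)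
    -- `(1 - β) / (1 + β)` is the fixed point of `v ↦ β² v + (1 - β)²`
    have hfixed : (1 - β) / (1 + β) * (1 - β ^ 2) = (1 - β) ^ 2 := by
      field_simp; ring
    have hpow : β ^ (k + 1 - 1) = β * β ^ (k - 1) := by
      rw [← pow_succ']; congr 1; omega
    change ∫ ω, ‖β • ema β ξ k ω + (1 - β) • ξ (k + 1) ω‖ ^ 2 ∂μ ≤ _
    rw [hstep, hpow]
    nlinarith [mul_le_mul_of_nonneg_left ih (sq_nonneg β),
      mul_le_mul_of_nonneg_left (hξ.integral_norm_sq_le (k + 1) (by omega)) (sq_nonneg (1 - β))]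

lemma integral_norm_momentum_noise_le {β₁ β₂ : ℝ} (h10 : 0 < β₁) (h11 : β₁ < 1) (h20 : 0 < β₂)
    (h21 : β₂ < 1) (hσ : 0 ≤ σ) (hξ : IsMartingaleDiffSeq 𝓕 μ ξ σ) {k : ℕ} (hk : 1 ≤ k) :
    ∫ ω, ‖(β₁ • ema β₂ ξ (k - 1) + (1 - β₁) • ξ k) ω‖ ∂μ ≤
      σ * (β₂ ^ (k - 1) + (|β₁ - β₂| + 1 - β₁) / √(1 - β₂)) := by
  have hA : 0 ≤ (|β₁ - β₂| + 1 - β₁) / √(1 - β₂) := by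
    have := abs_nonneg (β₁ - β₂); exact div_nonneg (by linarith) (Real.sqrt_nonneg _)
  obtain ⟨j, rfl⟩ : ∃ j, k = j + 1 := ⟨k - 1, by omega⟩
  rcases j with _ | j
  · have hξ1 : ∫ ω, ‖ξ 1 ω‖ ∂μ ≤ σ :=
      (integral_norm_le_sqrt_integral_norm_sq (hξ.memLp 1 le_rfl)).trans
        (Real.sqrt_le_sqrt (hξ.integral_norm_sq_le 1 le_rfl) |>.trans_eq (Real.sqrt_sq hσ))
    simp only [ema, ← add_smul, add_sub_cancel, one_smul, Nat.sub_self, pow_zero]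
    nlinarith
  · set q := β₂ ^ j
    have hW := integral_norm_ema_sq_le h20.le hξ (j + 1) j.succ_pos
    simp only [Nat.add_sub_cancel, Pi.add_apply, Pi.smul_apply] at hW ⊢
    calc ∫ ω, ‖β₁ • ema β₂ ξ (j + 1) ω + (1 - β₁) • ξ (j + 1 + 1) ω‖ ∂μ
        ≤ √(∫ ω, ‖β₁ • ema β₂ ξ (j + 1) ω + (1 - β₁) • ξ (j + 1 + 1) ω‖ ^ 2 ∂μ) :=
          integral_norm_le_sqrt_integral_norm_sq
            (((memLp_ema hξ.memLp _).const_smul β₁).add ((hξ.memLp _ (by omega)).const_smul _))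
      _ ≤ √(σ ^ 2 * (β₁ ^ 2 * (q ^ 2 + (1 - q ^ 2) * ((1 - β₂) / (1 + β₂))) + (1 - β₁) ^ 2)) := by
          rw [integral_norm_smul_ema_add_smul_sq hξ j.succ_pos]
          gcongr
          nlinarith [mul_le_mul_of_nonneg_left hW (sq_nonneg β₁), mul_le_mul_of_nonneg_left
            (hξ.integral_norm_sq_le (j + 1 + 1) (by omega)) (sq_nonneg (1 - β₁))]
      _ ≤ σ * (β₂ * q + (|β₁ - β₂| + 1 - β₁) / √(1 - β₂)) := by
          rw [Real.sqrt_mul (sq_nonneg σ), Real.sqrt_sq hσ]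
          gcongr
          exact sqrt_momentum_coeff_le β₁ β₂ q h10 h11 h20 h21 (by positivity)
            (pow_le_one₀ h20.le h21.le)
      _ = σ * (β₂ ^ (j + 1) + (|β₁ - β₂| + 1 - β₁) / √(1 - β₂)) := by rw [pow_succ']

end MartingaleDifference

theorem lion_bounding_lemma_pointwise_general {d : ℕ} (hd : 1 ≤ d) (f : EuclideanSpace ℝ (Fin d) → ℝ) (L : ℝ)
    (hL : ∀ x y, ‖gradient f x - gradient f y‖ ≤ L * ‖x - y‖)
    {Ω : Type*} [MeasurableSpace Ω] (P : Measure Ω) [IsProbabilityMeasure P]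
    (𝓕 : Filtration ℕ ‹MeasurableSpace Ω›)
    (β₁ β₂ η lam σ : ℝ)
    (hβ₁ : β₁ ∈ Set.Ioo (0 : ℝ) 1) (hβ₂ : β₂ ∈ Set.Ioo (0 : ℝ) 1)
    (hη : 0 < η) (hlam : 0 < lam) (hσ : 0 < σ) (hηlam : η * lam ≤ 1)
    (g m c θ : ℕ → Ω → EuclideanSpace ℝ (Fin d))
    (hg_meas : ∀ k, 1 ≤ k → StronglyMeasurable[𝓕 k] (g k))
    (hg_L2 : ∀ k, 1 ≤ k → MemLp (g k) 2 P)
    (hcrec : ∀ k, 1 ≤ k → ∀ ω, c k ω = β₁ • m (k - 1) ω + (1 - β₁) • g k ω)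
    (hθrec : ∀ k, 1 ≤ k → ∀ ω,
      θ (k + 1) ω = θ k ω - η • (signVec (c k ω) + lam • θ k ω))
    (hmrec : ∀ k, 1 ≤ k → ∀ ω, m k ω = β₂ • m (k - 1) ω + (1 - β₂) • g k ω)
    (hm0 : ∀ ω, m 0 ω = g 1 ω)
    (θ₁ : EuclideanSpace ℝ (Fin d)) (hθ₁ : ∀ ω, θ 1 ω = θ₁)
    (hθ₁box : linfNorm θ₁ ≤ 1 / lam)
    (hunbiased : ∀ k, 1 ≤ k →
      P[g k | 𝓕 (k - 1)] =ᵐ[P] fun ω => gradient f (θ k ω))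
    (hvar : ∀ k, 1 ≤ k → ∀ᵐ ω ∂P,
      (P[fun ω' => ‖g k ω' - gradient f (θ k ω')‖ ^ 2 | 𝓕 (k - 1)]) ω ≤ σ ^ 2)
    : ∀ k, 1 ≤ k →
      ∫ ω, ‖c k ω - gradient f (θ k ω)‖ ∂P ≤
        β₂ ^ (k - 1) * σ + 2 * L * η * Real.sqrt d / (1 - β₂)
          + (|β₁ - β₂| + 1 - β₁) * σ / Real.sqrt (1 - β₂) := by
  intro k hk
  obtain ⟨hβ₁0, hβ₁1⟩ := hβ₁
  obtain ⟨hβ₂0, hβ₂1⟩ := hβ₂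
  have : Nonempty (Fin d) := ⟨⟨0, hd⟩⟩
  set G : ℕ → Ω → EuclideanSpace ℝ (Fin d) := fun j ω => gradient f (θ j ω)
  set C := 2 * L * η * √d
  have hξ : IsMartingaleDiffSeq 𝓕 P (g - G) σ :=
    isMartingaleDiffSeq_sub hg_meas hg_L2 hunbiased hvar
  have hG : ∀ ω j, 1 ≤ j → ‖G j ω - G (j + 1) ω‖ ≤ C := fun ω j hj => by
    have hθ := norm_lion_iterate_sub_succ_le (θ := fun j => θ j ω) hη.le hlam hηlam
      (fun k hk => hθrec k hk ω) ((hθ₁ ω).symm ▸ hθ₁box) hj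
    exact (hL _ _).trans <|
      (mul_le_mul_of_nonneg_left hθ (nonneg_of_forall_norm_sub_le_mul hL)).trans_eq (by ring)
  have hm : m = ema β₂ g := funext (eq_ema_of_rec (funext hm0) fun j hj => funext (hmrec j hj))
  have hsplit : ∀ ω, ‖c k ω - G k ω‖ ≤
      ‖(β₁ • ema β₂ (g - G) (k - 1) + (1 - β₁) • (g - G) k) ω‖ + C / (1 - β₂) := fun ω => by
    rw [hcrec k hk, hm, ema_apply, Pi.add_apply, Pi.smul_apply, Pi.smul_apply, ema_apply]
    exact norm_momentum_sub_le hβ₁0.le hβ₁1.le hβ₂0.le hβ₂1 (hG ω) hk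
  have hN : Integrable (fun ω => ‖(β₁ • ema β₂ (g - G) (k - 1) + (1 - β₁) • (g - G) k) ω‖) P :=
    (((memLp_ema hξ.memLp _).const_smul β₁).add
      ((hξ.memLp k hk).const_smul _)).integrable one_le_two |>.norm
  calc ∫ ω, ‖c k ω - G k ω‖ ∂P
      ≤ ∫ ω, (‖(β₁ • ema β₂ (g - G) (k - 1) + (1 - β₁) • (g - G) k) ω‖ + C / (1 - β₂)) ∂P :=
        integral_mono_of_nonneg (ae_of_all _ fun _ => norm_nonneg _)
          (hN.add (integrable_const _)) (ae_of_all _ hsplit)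
    _ ≤ σ * (β₂ ^ (k - 1) + (|β₁ - β₂| + 1 - β₁) / √(1 - β₂)) + C / (1 - β₂) := by
        rw [integral_add hN (integrable_const _), integral_const]
        simpa using integral_norm_momentum_noise_le hβ₁0 hβ₁1 hβ₂0 hβ₂1 hσ.le hξ hk
    _ = _ := by ring

theorem lion_bounding_lemma_pointwise {d : ℕ} (hd : 1 ≤ d) (f : EuclideanSpace ℝ (Fin d) → ℝ) (L : ℝ)
    (hf : Differentiable ℝ f)
    (hL : ∀ x y, ‖gradient f x - gradient f y‖ ≤ L * ‖x - y‖)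
    {Ω : Type*} [MeasurableSpace Ω] (P : Measure Ω) [IsProbabilityMeasure P]
    (𝓕 : Filtration ℕ ‹MeasurableSpace Ω›)
    (β₁ β₂ η lam σ : ℝ)
    (hβ₁ : β₁ ∈ Set.Ioo (0 : ℝ) 1) (hβ₂ : β₂ ∈ Set.Ioo (0 : ℝ) 1)
    (hη : 0 < η) (hlam : 0 < lam) (hσ : 0 < σ) (hηlam : η * lam ≤ 1)
    (g m c θ : ℕ → Ω → EuclideanSpace ℝ (Fin d))
    (hg_meas : ∀ k, 1 ≤ k → StronglyMeasurable[𝓕 k] (g k))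
    (hg_L2 : ∀ k, 1 ≤ k → MemLp (g k) 2 P)
    (hcrec : ∀ k, 1 ≤ k → ∀ ω, c k ω = β₁ • m (k - 1) ω + (1 - β₁) • g k ω)
    (hθrec : ∀ k, 1 ≤ k → ∀ ω,
      θ (k + 1) ω = θ k ω - η • (signVec (c k ω) + lam • θ k ω))
    (hmrec : ∀ k, 1 ≤ k → ∀ ω, m k ω = β₂ • m (k - 1) ω + (1 - β₂) • g k ω)
    (hm0 : ∀ ω, m 0 ω = g 1 ω)
    (θ₁ : EuclideanSpace ℝ (Fin d)) (hθ₁ : ∀ ω, θ 1 ω = θ₁)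
    (hθ₁box : linfNorm θ₁ ≤ 1 / lam)
    (hunbiased : ∀ k, 1 ≤ k →
      P[g k | 𝓕 (k - 1)] =ᵐ[P] fun ω => gradient f (θ k ω))
    (hvar : ∀ k, 1 ≤ k → ∀ᵐ ω ∂P,
      (P[fun ω' => ‖g k ω' - gradient f (θ k ω')‖ ^ 2 | 𝓕 (k - 1)]) ω ≤ σ ^ 2)
    : ∀ k, 1 ≤ k →
      ∫ ω, ‖c k ω - gradient f (θ k ω)‖ ∂P ≤
        β₂ ^ (k - 1) * σ + 2 * L * η * Real.sqrt d / (1 - β₂)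
          + (|β₁ - β₂| + 1 - β₁) * σ / Real.sqrt (1 - β₂) :=
  lion_bounding_lemma_pointwise_general hd f L hL P 𝓕 β₁ β₂ η lam σ hβ₁ hβ₂ hη hlam hσ hηlam g m c θ
    hg_meas hg_L2 hcrec hθrec hmrec hm0 θ₁ hθ₁ hθ₁box hunbiased hvar
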